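/- arXiv:2310.16628 — 5 statements merged into one kernel-verified Lean document; each statement's English description precedes it below -/
import Mathlib

section
/- Let z be a nonzero real number and c, d complex numbers. For every R > 0, ∫₀^R |c e^{-izx} + d e^{izx}|² dx ≥ (R - 1/|z|)(|c|² + |d|²). Consequently, if x ↦ c e^{-izx} + d e^{izx} belongs to L²(0,∞), then c = d = 0. -/
open MeasureTheory Complex

theorem stmt_0 (z : ℝ) (hz : z ≠ 0) (c d : ℂ) :
    (∀ R : ℝ, 0 < R →
      (R - 1 / |z|) * (‖c‖ ^ 2 + ‖d‖ ^ 2) ≤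
        ∫ x in (0 : ℝ)..R, ‖c * Complex.exp (-Complex.I * z * x) + d * Complex.exp (Complex.I * z * x)‖ ^ 2) ∧
    (MemLp (fun x : ℝ => c * Complex.exp (-Complex.I * z * x) + d * Complex.exp (Complex.I * z * x)) 2
        (volume.restrict (Set.Ioi 0)) → c = 0 ∧ d = 0) := by
  -- pointwise expansion of the square of the norm
  have key : ∀ x : ℝ, ‖c * Complex.exp (-Complex.I * z * x) + d * Complex.exp (Complex.I * z * x)‖ ^ 2
      = (‖c‖ ^ 2 + ‖d‖ ^ 2) + 2 * (c * (starRingEnd ℂ) d * Complex.exp (-2 * Complex.I * z * x)).re := by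
    intro x
    rw [Complex.sq_norm, Complex.normSq_add]
    have h1 : Complex.normSq (c * Complex.exp (-Complex.I * z * x)) = ‖c‖^2 := by
      rw [Complex.normSq_mul, ← Complex.sq_norm, ← Complex.sq_norm,
        Complex.norm_exp]
      simp
    have h2 : Complex.normSq (d * Complex.exp (Complex.I * z * x)) = ‖d‖^2 := by
      rw [Complex.normSq_mul, ← Complex.sq_norm, ← Complex.sq_norm,
        Complex.norm_exp]
      simp
    have h3 : c * Complex.exp (-Complex.I * z * x) * (starRingEnd ℂ) (d * Complex.exp (Complex.I * z * x))
        = c * (starRingEnd ℂ) d * Complex.exp (-2 * Complex.I * z * x) := by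
      rw [map_mul, ← Complex.exp_conj]
      have : (starRingEnd ℂ) (Complex.I * z * x) = -Complex.I * z * x := by
        simp [map_mul, Complex.conj_I, Complex.conj_ofReal]
      rw [this, mul_mul_mul_comm, ← Complex.exp_add]
      ring_nf
    rw [h1, h2, h3]
  set w := c * (starRingEnd ℂ) d with hw
  -- the bound on the cross term
  have cross : ∀ R : ℝ, 0 < R →
      |∫ x in (0:ℝ)..R, 2 * (w * Complex.exp (-2 * Complex.I * z * x)).re|
      ≤ (1/|z|) * (‖c‖^2 + ‖d‖^2) := by
    intro R hR
    set k : ℂ := -2 * Complex.I * z with hk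
    have hk0 : k ≠ 0 := by
      simp [hk, Complex.ext_iff, hz]
    have harg : ∀ x : ℝ, (-2 * Complex.I * (z:ℂ) * (x:ℂ)) = k * x := fun x => by rw [hk]
    have hint : IntervalIntegrable (fun x : ℝ => w * Complex.exp (k * x)) volume 0 R := by
      apply Continuous.intervalIntegrable
      fun_prop
    have h1 : ∫ x in (0:ℝ)..R, 2 * (w * Complex.exp (-2 * Complex.I * z * x)).re
        = 2 * (w * ((Complex.exp (k * R) - 1)/k)).re := by
      simp_rw [harg]
      rw [intervalIntegral.integral_const_mul]
      congr 1
      have := Complex.reCLM.intervalIntegral_comp_comm hint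
      simp only [Complex.reCLM_apply] at this
      rw [this, intervalIntegral.integral_const_mul, integral_exp_mul_complex hk0]
      norm_num
    rw [h1]
    have hb : |2 * (w * ((Complex.exp (k * R) - 1)/k)).re| ≤ 2 * ‖c‖ * ‖d‖ * (1/|z|) := by
      have h2 : |(w * ((Complex.exp (k * R) - 1)/k)).re| ≤ ‖w‖ * (2 / ‖k‖) := by
        refine (Complex.abs_re_le_norm _).trans ?_
        rw [norm_mul, norm_div]
        have hnum : ‖Complex.exp (k*R) - 1‖ ≤ 2 := by
          calc ‖Complex.exp (k*R) - 1‖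
              ≤ ‖Complex.exp (k*R)‖ + ‖(1:ℂ)‖ :=
                norm_sub_le _ _
            _ ≤ 2 := by
                rw [Complex.norm_exp]
                have : (k * R).re = 0 := by simp [hk]
                rw [this]
                norm_num
        gcongr
      have hkn : ‖k‖ = 2 * |z| := by
        simp [hk, Complex.norm_real]
      have hwn : ‖w‖ = ‖c‖ * ‖d‖ := by simp [hw]
      rw [hkn, hwn] at h2
      have h3 : ‖c‖ * ‖d‖ * (2/(2*|z|)) = ‖c‖ * ‖d‖ * (1/|z|) := by
        rw [div_mul_eq_div_div]
        norm_num
      rw [h3] at h2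
      rw [abs_mul, _root_.abs_two]
      linarith
    refine hb.trans ?_
    have : 2 * ‖c‖ * ‖d‖ ≤ ‖c‖^2 + ‖d‖^2 := by nlinarith [sq_nonneg (‖c‖ - ‖d‖)]
    have hz' : 0 < 1/|z| := by positivity
    nlinarith
  -- part 1
  have part1 : ∀ R : ℝ, 0 < R →
      (R - 1 / |z|) * (‖c‖ ^ 2 + ‖d‖ ^ 2) ≤
        ∫ x in (0 : ℝ)..R, ‖c * Complex.exp (-Complex.I * z * x) + d * Complex.exp (Complex.I * z * x)‖ ^ 2 := by
    intro R hR
    have hg : IntervalIntegrable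
        (fun x : ℝ => 2 * (w * Complex.exp (-2 * Complex.I * z * x)).re) volume 0 R := by
      apply Continuous.intervalIntegrable
      fun_prop
    have hsplit : (∫ x in (0:ℝ)..R,
          ‖c * Complex.exp (-Complex.I * z * x) + d * Complex.exp (Complex.I * z * x)‖ ^ 2)
        = R * (‖c‖^2 + ‖d‖^2)
          + ∫ x in (0:ℝ)..R, 2 * (w * Complex.exp (-2 * Complex.I * z * x)).re := by
      simp_rw [key]
      rw [intervalIntegral.integral_add (intervalIntegrable_const) hg]
      simp only [intervalIntegral.integral_const, smul_eq_mul, sub_zero]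
    rw [hsplit]
    have h4 := (abs_le.mp (cross R hR)).1
    nlinarith [sq_nonneg ‖c‖, sq_nonneg ‖d‖]
  refine ⟨part1, ?_⟩
  -- part 2
  intro hmem
  set f : ℝ → ℂ := fun x : ℝ => c * Complex.exp (-Complex.I * z * x) + d * Complex.exp (Complex.I * z * x)
    with hf
  have hint2 : Integrable (fun x => ‖f x‖^2) (volume.restrict (Set.Ioi 0)) := by
    have h := hmem.integrable_norm_rpow (by norm_num) (by norm_num)
    have h2 : ((2 : ENNReal)).toReal = (2:ℝ) := by norm_num
    rw [h2] at h
    convert h using 2 with x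
    rw [show ((2:ℝ)) = ((2:ℕ):ℝ) by norm_num, Real.rpow_natCast]
  obtain ⟨M, hM⟩ : ∃ M : ℝ, M = ∫ x in Set.Ioi (0:ℝ), ‖f x‖^2 := ⟨_, rfl⟩
  have hMb : ∀ R : ℝ, 0 < R → (∫ x in (0:ℝ)..R, ‖f x‖^2) ≤ M := by
    intro R hR
    rw [intervalIntegral.integral_of_le hR.le, hM]
    refine setIntegral_mono_set hint2 ?_ ?_
    · filter_upwards with x using by positivity
    · exact (Set.Ioc_subset_Ioi_self).eventuallyLE
  have hS : ‖c‖^2 + ‖d‖^2 ≤ 0 := by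
    by_contra h
    push_neg at h
    set S := ‖c‖^2 + ‖d‖^2 with hSdef
    have hzpos : (0:ℝ) < 1/|z| := by positivity
    have hMnn : 0 ≤ M := by
      rw [hM]
      positivity
    set R := M/S + 1/|z| + 1 with hRdef
    have hRpos : 0 < R := by positivity
    have h1 := part1 R hRpos
    have h2 := hMb R hRpos
    have h3 : (R - 1/|z|) * S = M + S := by
      rw [hRdef]
      field_simp
      ring
    rw [h3] at h1
    linarith
  have hc : c = 0 := by
    have : ‖c‖^2 = 0 := by nlinarith [sq_nonneg ‖c‖, sq_nonneg ‖d‖]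
    have := pow_eq_zero_iff (n := 2) (by norm_num) |>.mp this
    exact norm_eq_zero.mp this
  have hd : d = 0 := by
    have : ‖d‖^2 = 0 := by nlinarith [sq_nonneg ‖c‖, sq_nonneg ‖d‖]
    have := pow_eq_zero_iff (n := 2) (by norm_num) |>.mp this
    exact norm_eq_zero.mp this
  exact ⟨hc, hd⟩
end

section
/- Fix an integer ℓ ≥ 3 and a real number z. Let X = e^{iz}. Then |(4-ℓ)X² + (ℓ-3)| < |(2-ℓ)X² + ℓ|. -/
theorem stmt_3 (ℓ : ℕ) (hℓ : 3 ≤ ℓ) (z : ℝ) :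
    ‖((4 : ℂ) - (ℓ : ℂ)) * Complex.exp (Complex.I * z) ^ 2 + ((ℓ : ℂ) - 3)‖ <
      ‖((2 : ℂ) - (ℓ : ℂ)) * Complex.exp (Complex.I * z) ^ 2 + (ℓ : ℂ)‖ := by
  have hX : Complex.exp (Complex.I * z) ^ 2
      = (Real.cos (2*z) : ℂ) + (Real.sin (2*z) : ℂ) * Complex.I := by
    rw [sq, ← Complex.exp_add]
    have : Complex.I * z + Complex.I * z = ((2*z : ℝ) : ℂ) * Complex.I := by
      push_cast; ring
    rw [this, Complex.exp_mul_I, Complex.ofReal_cos, Complex.ofReal_sin]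
  have hn : (3 : ℝ) ≤ (ℓ : ℝ) := by exact_mod_cast hℓ
  have hc1 : Real.cos (2*z) ≤ 1 := Real.cos_le_one _
  have hc1' : Real.cos (z*2) ≤ 1 := Real.cos_le_one _
  have hpy' : Real.cos (z*2) ^ 2 + Real.sin (z*2) ^ 2 = 1 := Real.cos_sq_add_sin_sq _
  have hpy : Real.cos (2*z) ^ 2 + Real.sin (2*z) ^ 2 = 1 := Real.cos_sq_add_sin_sq _
  apply lt_of_pow_lt_pow_left₀ 2 (norm_nonneg _)
  rw [hX]
  simp only [Complex.sq_norm, Complex.normSq_apply,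
    Complex.add_re, Complex.add_im, Complex.mul_re, Complex.mul_im,
    Complex.sub_re, Complex.sub_im, Complex.ofReal_re, Complex.ofReal_im,
    Complex.natCast_re, Complex.natCast_im, Complex.I_re, Complex.I_im,
    Complex.re_ofNat, Complex.im_ofNat, Complex.one_re, Complex.one_im]
  ring_nf
  nlinarith [sq_nonneg (Real.sin (z*2)), sq_nonneg ((ℓ:ℝ) - 3)]
end

section
/- Let ℓ > 0 and define for real z the function d_c(z) = e^{iz(1+ℓ)}(-3 + e^{-iz} + e^{-izℓ} + 5 e^{-iz(1+ℓ)}). Suppose (p_n), (q_n) are sequences of positive odd integers tending to infinity with |ℓ - p_n/q_n| < 8/q_n² for all n. Then with z_n = q_n π one has d_c(z_n) = -4 e^{i z_n (1+ℓ)}(1 - e^{-i r_n}) where r_n = z_n ℓ - p_n π satisfies |r_n| < 8π/q_n, and consequently d_c(z_n) → 0 as n → ∞. -/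
open Complex Filter Real

lemma exp_odd_aux (m : ℕ) (hm : Odd m) :
    Complex.exp (-(Complex.I * ((m : ℝ) * π))) = -1 := by
  have h : (-(Complex.I * ((m : ℝ) * π))) = (m : ℕ) * (-(π * Complex.I)) := by
    push_cast; ring
  rw [h, Complex.exp_nat_mul, Complex.exp_neg, Complex.exp_pi_mul_I]
  simp [hm.neg_one_pow]

theorem stmt_7 (ℓ : ℝ) (hℓ : 0 < ℓ) (p q : ℕ → ℕ)
    (hodd : ∀ n, Odd (p n) ∧ Odd (q n)) (hpos : ∀ n, 0 < p n ∧ 0 < q n)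
    (hp : Tendsto p atTop atTop) (hq : Tendsto q atTop atTop)
    (happrox : ∀ n, |ℓ - (p n : ℝ) / (q n : ℝ)| < 8 / (q n : ℝ) ^ 2)
    (dc : ℝ → ℂ)
    (hdc : ∀ z : ℝ, dc z = Complex.exp (Complex.I * z * (1 + ℓ)) *
      (-3 + Complex.exp (-Complex.I * z) + Complex.exp (-Complex.I * (z * ℓ))
        + 5 * Complex.exp (-Complex.I * (z * (1 + ℓ)))))
    (zn rn : ℕ → ℝ)
    (hz : ∀ n, zn n = (q n : ℝ) * π)
    (hr : ∀ n, rn n = zn n * ℓ - (p n : ℝ) * π) :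
    (∀ n, |rn n| < 8 * π / (q n : ℝ) ∧
      dc (zn n) = -4 * Complex.exp (Complex.I * (zn n) * (1 + ℓ)) *
        (1 - Complex.exp (-Complex.I * (rn n)))) ∧
    Tendsto (fun n => dc (zn n)) atTop (nhds 0) := by
  have hQ : ∀ n, (0 : ℝ) < (q n : ℝ) := fun n => by exact_mod_cast (hpos n).2
  have hbound : ∀ n, |rn n| < 8 * π / (q n : ℝ) := by
    intro n
    have hq0 := hQ n
    have h1 : rn n = π * ((q n : ℝ) * (ℓ - (p n : ℝ) / (q n : ℝ))) := by
      rw [hr n, hz n]; field_simp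
    rw [h1, abs_mul, abs_mul, abs_of_pos Real.pi_pos, abs_of_pos hq0]
    have h2 := happrox n
    calc π * ((q n : ℝ) * |ℓ - (p n : ℝ) / (q n : ℝ)|)
        < π * ((q n : ℝ) * (8 / (q n : ℝ) ^ 2)) := by
          apply mul_lt_mul_of_pos_left _ Real.pi_pos
          exact mul_lt_mul_of_pos_left h2 hq0
      _ = 8 * π / (q n : ℝ) := by field_simp
  have hkey : ∀ n, dc (zn n) = -4 * Complex.exp (Complex.I * (zn n) * (1 + ℓ)) *
      (1 - Complex.exp (-Complex.I * (rn n))) := by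
    intro n
    have e1 : Complex.exp (-Complex.I * (zn n : ℝ)) = -1 := by
      have : (-Complex.I * (zn n : ℝ)) = -(Complex.I * ((q n : ℝ) * π)) := by
        rw [hz n]; push_cast; ring
      rw [this, exp_odd_aux (q n) (hodd n).2]
    have e2 : Complex.exp (-Complex.I * ((zn n : ℝ) * ℓ)) =
        -Complex.exp (-Complex.I * (rn n : ℝ)) := by
      have h3 : (zn n : ℝ) * ℓ = (p n : ℝ) * π + rn n := by rw [hr n]; ring
      have : (-Complex.I * ((zn n : ℝ) * ℓ) : ℂ) =
          (-(Complex.I * ((p n : ℝ) * π))) + (-Complex.I * (rn n : ℝ)) := by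
        rw [show ((zn n : ℝ) * ℓ : ℂ) = (((zn n : ℝ) * ℓ : ℝ) : ℂ) by push_cast; ring,
          h3]
        push_cast; ring
      rw [this, Complex.exp_add, exp_odd_aux (p n) (hodd n).1]
      ring
    have e3 : Complex.exp (-Complex.I * ((zn n : ℝ) * (1 + ℓ))) =
        Complex.exp (-Complex.I * (rn n : ℝ)) := by
      have : (-Complex.I * ((zn n : ℝ) * (1 + ℓ)) : ℂ) =
          (-Complex.I * (zn n : ℝ)) + (-Complex.I * ((zn n : ℝ) * ℓ)) := by ring
      rw [this, Complex.exp_add, e1, e2]; ring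
    rw [hdc (zn n)]
    push_cast at e2 e3 ⊢
    rw [e1, e2, e3]
    ring
  refine ⟨fun n => ⟨hbound n, hkey n⟩, ?_⟩
  -- rn → 0
  have hqtop : Tendsto (fun n => (q n : ℝ)) atTop atTop :=
    tendsto_natCast_atTop_atTop.comp hq
  have hgo : Tendsto (fun n => 8 * π / (q n : ℝ)) atTop (nhds 0) :=
    Tendsto.div_atTop tendsto_const_nhds hqtop
  have hr0 : Tendsto rn atTop (nhds 0) := by
    apply squeeze_zero_norm (fun n => (hbound n).le) hgo
  have hexp : Tendsto (fun n => Complex.exp (-Complex.I * (rn n : ℝ))) atTop (nhds 1) := by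
    have h1 : Tendsto (fun n => (-Complex.I * (rn n : ℝ) : ℂ)) atTop (nhds 0) := by
      have := (Complex.continuous_ofReal.tendsto 0).comp hr0
      simpa using this.const_mul (-Complex.I)
    simpa [Function.comp_def] using (Complex.continuous_exp.tendsto 0).comp h1
  rw [tendsto_zero_iff_norm_tendsto_zero]
  have hnorm : ∀ n, ‖dc (zn n)‖ = 4 * ‖(1 : ℂ) - Complex.exp (-Complex.I * (rn n : ℝ))‖ := by
    intro n
    rw [hkey n, norm_mul, norm_mul]
    have : ‖Complex.exp (Complex.I * (zn n : ℝ) * (1 + (ℓ:ℂ)))‖ = 1 := by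
      rw [Complex.norm_exp]
      simp [Complex.mul_re, Complex.mul_im]
    rw [this]
    simp
  simp only [hnorm]
  have : Tendsto (fun n => (1 : ℂ) - Complex.exp (-Complex.I * (rn n : ℝ))) atTop (nhds 0) := by
    simpa using (tendsto_const_nhds (x := (1:ℂ))).sub hexp
  simpa using (this.norm.const_mul 4)
end

section
/- Let f : [a,b] → ℂ be C¹ with f(μ) ≠ 0 for all μ ∈ [a,b], where 0 ≤ a < b. Then for all t > 0 and s ∈ ℝ, |∫_a^b e^{-itμ²} (1/f(μ)) e^{iμs} dμ| ≤ (4√2/√t) (1/|f(b)| + ∫_a^b |f'(μ)|/|f(μ)|² dμ). -/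
open Real intervalIntegral

lemma normE (t ν : ℝ) : ‖Complex.exp (-(t:ℂ) * Complex.I * (ν:ℂ)^2)‖ = 1 := by
  rw [Complex.norm_exp]
  norm_num [Complex.mul_re, Complex.mul_im, ← Complex.ofReal_pow]

lemma hasDerivE (c : ℂ) (ν : ℝ) :
    HasDerivAt (fun ν : ℝ => Complex.exp (c * (ν:ℂ)^2)) (Complex.exp (c * (ν:ℂ)^2) * (c * (2*(ν:ℂ)))) ν := by
  have h : HasDerivAt (fun z : ℂ => Complex.exp (c * z^2))
      (Complex.exp (c * (ν:ℂ)^2) * (c * (2*(ν:ℂ)))) (ν:ℂ) := by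
    have h := ((hasDerivAt_pow 2 (ν:ℂ)).const_mul c).cexp
    refine h.congr_deriv ?_
    norm_num
  exact h.comp_ofReal

lemma contE (t : ℝ) : Continuous (fun ν : ℝ => Complex.exp (-(t:ℂ) * Complex.I * (ν:ℂ)^2)) := by
  fun_prop

lemma fresnel_nonneg (t v : ℝ) (ht : 0 < t) (hv : 0 ≤ v) :
    ‖∫ ν in (0:ℝ)..v, Complex.exp (-(t:ℂ) * Complex.I * (ν:ℂ)^2)‖ ≤ 2 / Real.sqrt t := by
  set c : ℂ := -(t:ℂ) * Complex.I with hc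
  set E : ℝ → ℂ := fun ν => Complex.exp (c * (ν:ℂ)^2) with hE
  have hst : 0 < Real.sqrt t := Real.sqrt_pos.2 ht
  have hsq : Real.sqrt t * Real.sqrt t = t := Real.mul_self_sqrt ht.le
  set q : ℝ := (Real.sqrt t)⁻¹ with hqdef
  have hq : 0 < q := by positivity
  have hcont : Continuous E := contE t
  have hnorm1 : ∀ ν : ℝ, ‖E ν‖ = 1 := fun ν => normE t ν
  have hnc : ∀ x : ℝ, ‖2 * c * (x:ℂ)‖ = 2 * t * |x| := by
    intro x
    simp [hc, norm_mul, abs_of_pos ht, Complex.norm_real, mul_assoc]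
  rcases le_or_gt v q with hvq | hvq
  · calc ‖∫ ν in (0:ℝ)..v, E ν‖ ≤ 1 * |v - 0| := by
          apply intervalIntegral.norm_integral_le_of_norm_le_const
          intro x _; rw [hnorm1]
      _ ≤ 2 / Real.sqrt t := by
          rw [one_mul, sub_zero, abs_of_nonneg hv]
          have : q ≤ 2 / Real.sqrt t := by
            rw [hqdef, inv_eq_one_div, div_le_div_iff₀ hst hst]; nlinarith
          linarith
  · have hvpos : 0 < v := lt_trans hq hvq
    have hint1 : IntervalIntegrable E MeasureTheory.volume 0 q := hcont.intervalIntegrable _ _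
    have hint2 : IntervalIntegrable E MeasureTheory.volume q v := hcont.intervalIntegrable _ _
    have hsplit : (∫ ν in (0:ℝ)..q, E ν) + ∫ ν in q..v, E ν = ∫ ν in (0:ℝ)..v, E ν :=
      intervalIntegral.integral_add_adjacent_intervals hint1 hint2
    have hhead : ‖∫ ν in (0:ℝ)..q, E ν‖ ≤ q := by
      calc ‖∫ ν in (0:ℝ)..q, E ν‖ ≤ 1 * |q - 0| := by
            apply intervalIntegral.norm_integral_le_of_norm_le_const
            intro x _; rw [hnorm1]
        _ = q := by rw [one_mul, sub_zero, abs_of_pos hq]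
    have hcne : c ≠ 0 := by
      simp [hc, Complex.ext_iff, Complex.mul_im]
      intro h; exact absurd h ht.ne'
    set u : ℝ → ℂ := fun ν => (2 * c * (ν:ℂ))⁻¹ with hu
    set u' : ℝ → ℂ := fun ν => -(2 * c) / (2 * c * (ν:ℂ))^2 with hu'
    set v' : ℝ → ℂ := fun ν => E ν * (c * (2*(ν:ℂ))) with hv'
    have hwne : ∀ x : ℝ, 0 < x → (2 * c * (x:ℂ)) ≠ 0 := by
      intro x hx
      refine mul_ne_zero (mul_ne_zero two_ne_zero hcne) ?_
      exact_mod_cast hx.ne'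
    have h2c : ‖2 * c‖ = 2 * t := by simpa using hnc 1
    have hderivu : ∀ x ∈ Set.uIcc q v, HasDerivAt u (u' x) x := by
      intro x hx
      rw [Set.uIcc_of_le hvq.le] at hx
      have hxpos : 0 < x := lt_of_lt_of_le hq hx.1
      have hz0 : HasDerivAt (fun z : ℂ => 2 * c * z) (2 * c) (x:ℂ) := by
        simpa using (hasDerivAt_id (x:ℂ)).const_mul (2 * c)
      have hz := hz0.inv (hwne x hxpos)
      simpa [hu, hu'] using hz.comp_ofReal
    have hderivv : ∀ x ∈ Set.uIcc q v, HasDerivAt E (v' x) x := fun x _ => hasDerivE c x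
    have hu'cont : ContinuousOn u' (Set.uIcc q v) := by
      apply ContinuousOn.div continuousOn_const
      · fun_prop
      · intro x hx
        rw [Set.uIcc_of_le hvq.le] at hx
        exact pow_ne_zero _ (hwne x (lt_of_lt_of_le hq hx.1))
    have hIBP := intervalIntegral.integral_mul_deriv_eq_deriv_mul hderivu hderivv
      (hu'cont.intervalIntegrable) ((hcont.mul (by fun_prop)).intervalIntegrable _ _)
    have hkey : ∫ ν in q..v, E ν = ∫ ν in q..v, u ν * v' ν := by
      apply intervalIntegral.integral_congr
      intro x hx
      rw [Set.uIcc_of_le hvq.le] at hx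
      have hxpos : 0 < x := lt_of_lt_of_le hq hx.1
      have hw := hwne x hxpos
      show E x = u x * v' x
      rw [show u x * v' x = E x * ((2*c*(x:ℂ))⁻¹ * (2*c*(x:ℂ))) from by simp only [hu, hv']; ring,
        inv_mul_cancel₀ hw, mul_one]
    have hnu : ∀ x : ℝ, 0 < x → ‖u x‖ = (2*t*x)⁻¹ := by
      intro x hx
      rw [hu]
      simp only [norm_inv, hnc, abs_of_pos hx]
    have hGa : (∫ ν in q..v, ‖u' ν * E ν‖) = (2*t)⁻¹ * (q⁻¹ - v⁻¹) := by
      have hcg : ∀ x ∈ Set.uIcc q v, ‖u' x * E x‖ = (2*t)⁻¹ * x^(-2:ℤ) := by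
        intro x hx
        rw [Set.uIcc_of_le hvq.le] at hx
        have hxpos : 0 < x := lt_of_lt_of_le hq hx.1
        rw [norm_mul, hnorm1, mul_one, hu', norm_div, norm_neg, norm_pow, hnc,
          abs_of_pos hxpos, h2c]
        have : (x:ℝ)^(-2:ℤ) = (x^2)⁻¹ := by
          rw [zpow_neg, zpow_two, sq]
        rw [this]
        field_simp
      rw [intervalIntegral.integral_congr hcg, intervalIntegral.integral_const_mul,
        integral_zpow (Or.inr ⟨by norm_num, fun h => by
          rw [Set.uIcc_of_le hvq.le] at h; exact absurd h.1 (by linarith)⟩)]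
      norm_num [zpow_neg]
      exact Or.inl (by ring)
    have htail : ‖∫ ν in q..v, E ν‖ ≤ (2*t*v)⁻¹ + (2*t*q)⁻¹ + (2*t)⁻¹ * (q⁻¹ - v⁻¹) := by
      rw [hkey, hIBP]
      calc ‖u v * E v - u q * E q - ∫ x in q..v, u' x * E x‖
          ≤ ‖u v * E v - u q * E q‖ + ‖∫ x in q..v, u' x * E x‖ := norm_sub_le _ _
        _ ≤ (‖u v * E v‖ + ‖u q * E q‖) + ∫ x in q..v, ‖u' x * E x‖ := by
            gcongr
            · exact norm_sub_le _ _
            · exact intervalIntegral.norm_integral_le_integral_norm hvq.le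
        _ = (2*t*v)⁻¹ + (2*t*q)⁻¹ + (2*t)⁻¹ * (q⁻¹ - v⁻¹) := by
            rw [norm_mul, norm_mul, hnorm1, hnorm1, mul_one, mul_one,
              hnu v hvpos, hnu q hq, hGa]
    have harith : q + ((2*t*v)⁻¹ + (2*t*q)⁻¹ + (2*t)⁻¹ * (q⁻¹ - v⁻¹)) = 2 / Real.sqrt t := by
      have hv0 : v ≠ 0 := hvpos.ne'
      have hst0 : Real.sqrt t ≠ 0 := hst.ne'
      rw [hqdef, ← hsq]
      field_simp
      ring_nf
      rw [Real.sqrt_sq hst.le]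
      linear_combination (0:ℝ) * hsq
    calc ‖∫ ν in (0:ℝ)..v, E ν‖ = ‖(∫ ν in (0:ℝ)..q, E ν) + ∫ ν in q..v, E ν‖ := by rw [hsplit]
      _ ≤ ‖∫ ν in (0:ℝ)..q, E ν‖ + ‖∫ ν in q..v, E ν‖ := norm_add_le _ _
      _ ≤ q + ((2*t*v)⁻¹ + (2*t*q)⁻¹ + (2*t)⁻¹ * (q⁻¹ - v⁻¹)) := by
          exact add_le_add hhead htail
      _ = 2 / Real.sqrt t := harith

lemma fresnel_all (t v : ℝ) (ht : 0 < t) :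
    ‖∫ ν in (0:ℝ)..v, Complex.exp (-(t:ℂ) * Complex.I * (ν:ℂ)^2)‖ ≤ 2 / Real.sqrt t := by
  rcases le_or_gt 0 v with hv | hv
  · exact fresnel_nonneg t v ht hv
  · set E : ℝ → ℂ := fun ν => Complex.exp (-(t:ℂ) * Complex.I * (ν:ℂ)^2) with hE
    have heven : ∀ x : ℝ, E (-x) = E x := by
      intro x; simp only [hE]; push_cast; ring_nf
    have h1 : ∫ ν in (0:ℝ)..(-v), E ν = ∫ ν in v..0, E ν := by
      have := intervalIntegral.integral_comp_neg (a := 0) (b := -v) (f := E)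
      simp only [heven] at this
      simpa using this
    have h2 : ‖∫ ν in (0:ℝ)..v, E ν‖ = ‖∫ ν in (0:ℝ)..(-v), E ν‖ := by
      rw [h1, intervalIntegral.integral_symm, norm_neg]
    rw [h2]
    exact fresnel_nonneg t (-v) ht (by linarith)

lemma fresnel_diff (t p r : ℝ) (ht : 0 < t) :
    ‖∫ ν in p..r, Complex.exp (-(t:ℂ) * Complex.I * (ν:ℂ)^2)‖ ≤ 4 / Real.sqrt t := by
  set E : ℝ → ℂ := fun ν => Complex.exp (-(t:ℂ) * Complex.I * (ν:ℂ)^2) with hE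
  have hcont : Continuous E := contE t
  have hsub : (∫ ν in (0:ℝ)..r, E ν) - ∫ ν in (0:ℝ)..p, E ν = ∫ ν in p..r, E ν :=
    intervalIntegral.integral_interval_sub_left (hcont.intervalIntegrable _ _)
      (hcont.intervalIntegrable _ _)
  rw [← hsub]
  calc ‖(∫ ν in (0:ℝ)..r, E ν) - ∫ ν in (0:ℝ)..p, E ν‖
      ≤ ‖∫ ν in (0:ℝ)..r, E ν‖ + ‖∫ ν in (0:ℝ)..p, E ν‖ := norm_sub_le _ _
    _ ≤ 2 / Real.sqrt t + 2 / Real.sqrt t :=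
        add_le_add (fresnel_all t r ht) (fresnel_all t p ht)
    _ = 4 / Real.sqrt t := by ring

lemma normExpI (r : ℝ) : ‖Complex.exp (Complex.I * r)‖ = 1 := by
  rw [Complex.norm_exp]
  simp

theorem stmt_17 (a b : ℝ) (ha : 0 ≤ a) (hab : a < b) (f f' : ℝ → ℂ)
    (hderiv : ∀ μ ∈ Set.Icc a b, HasDerivAt f (f' μ) μ)
    (hf' : ContinuousOn f' (Set.Icc a b))
    (hne : ∀ μ ∈ Set.Icc a b, f μ ≠ 0)
    (t s : ℝ) (ht : 0 < t) :
    ‖∫ μ in a..b, Complex.exp (-(Complex.I * t * μ ^ 2)) * (f μ)⁻¹ *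
        Complex.exp (Complex.I * μ * s)‖ ≤
      (4 * Real.sqrt 2 / Real.sqrt t) * (1 / ‖f b‖ + ∫ μ in a..b, ‖f' μ‖ / ‖f μ‖ ^ 2) := by
  have hst : 0 < Real.sqrt t := Real.sqrt_pos.2 ht
  have htc : (t:ℂ) ≠ 0 := by exact_mod_cast ht.ne'
  set μ₀ : ℝ := s / (2*t) with hμ₀
  set Eb : ℝ → ℂ := fun μ => Complex.exp (-(t:ℂ) * Complex.I * ((μ - μ₀ : ℝ):ℂ)^2) with hEb
  have hcontEb : Continuous Eb := by
    rw [hEb]; fun_prop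
  -- phase rewriting
  have hphase : ∀ μ : ℝ, Complex.exp (-(Complex.I * t * μ ^ 2)) * (f μ)⁻¹ *
      Complex.exp (Complex.I * μ * s)
      = Complex.exp (Complex.I * ((s^2/(4*t) : ℝ):ℂ)) * ((f μ)⁻¹ * Eb μ) := by
    intro μ
    have hexp : (-(Complex.I * t * μ ^ 2)) + Complex.I * μ * s
        = Complex.I * ((s^2/(4*t) : ℝ):ℂ) + (-(t:ℂ) * Complex.I * ((μ - μ₀ : ℝ):ℂ)^2) := by
      rw [hμ₀]
      push_cast
      field_simp
      ring
    calc Complex.exp (-(Complex.I * t * μ ^ 2)) * (f μ)⁻¹ * Complex.exp (Complex.I * μ * s)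
        = (f μ)⁻¹ * Complex.exp ((-(Complex.I * t * μ ^ 2)) + Complex.I * μ * s) := by
          rw [Complex.exp_add]; ring
      _ = (f μ)⁻¹ * Complex.exp (Complex.I * ((s^2/(4*t) : ℝ):ℂ)
            + (-(t:ℂ) * Complex.I * ((μ - μ₀ : ℝ):ℂ)^2)) := by rw [hexp]
      _ = Complex.exp (Complex.I * ((s^2/(4*t) : ℝ):ℂ)) * ((f μ)⁻¹ * Eb μ) := by
          rw [Complex.exp_add, hEb]; ring
  have hred : ‖∫ μ in a..b, Complex.exp (-(Complex.I * t * μ ^ 2)) * (f μ)⁻¹ *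
      Complex.exp (Complex.I * μ * s)‖ = ‖∫ μ in a..b, (f μ)⁻¹ * Eb μ‖ := by
    simp only [hphase]
    rw [intervalIntegral.integral_const_mul, norm_mul, normExpI, one_mul]
  rw [hred]
  -- continuity facts
  have hfc : ContinuousOn f (Set.Icc a b) :=
    fun x hx => (hderiv x hx).continuousAt.continuousWithinAt
  set g : ℝ → ℂ := fun μ => (f μ)⁻¹ with hg
  set g' : ℝ → ℂ := fun μ => -(f' μ) / (f μ)^2 with hg'
  have hg'cont : ContinuousOn g' (Set.Icc a b) :=
    (hf'.neg).div (hfc.pow 2) (fun x hx => pow_ne_zero _ (hne x hx))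
  have hgderiv : ∀ μ ∈ Set.uIcc a b, HasDerivAt g (g' μ) μ := by
    rw [Set.uIcc_of_le hab.le]
    intro μ hμ
    have h := (hasDerivAt_const μ (1:ℂ)).div (hderiv μ hμ) (hne μ hμ)
    have h2 : HasDerivAt (fun y => 1 / f y) (-(f' μ) / f μ ^ 2) μ := by
      exact h.congr_deriv (by ring)
    simpa [hg, hg', one_div] using h2
  set G : ℝ → ℂ := fun x => ∫ ν in a..x, Eb ν with hG
  have hGderiv : ∀ x ∈ Set.uIcc a b, HasDerivAt G (Eb x) x := by
    intro x _
    exact intervalIntegral.integral_hasDerivAt_right (hcontEb.intervalIntegrable _ _)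
      (hcontEb.stronglyMeasurableAtFilter _ _) hcontEb.continuousAt
  have hGbound : ∀ x : ℝ, ‖G x‖ ≤ 4 / Real.sqrt t := by
    intro x
    have : G x = ∫ ν in (a - μ₀)..(x - μ₀), Complex.exp (-(t:ℂ) * Complex.I * (ν:ℂ)^2) := by
      rw [hG]
      exact intervalIntegral.integral_comp_sub_right
        (fun ν => Complex.exp (-(t:ℂ) * Complex.I * (ν:ℂ)^2)) μ₀
    rw [this]
    exact fresnel_diff t _ _ ht
  have hGcont : ContinuousOn G (Set.Icc a b) := by
    rw [← Set.uIcc_of_le hab.le]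
    exact fun x hx => (hGderiv x hx).continuousAt.continuousWithinAt
  have hIBP := intervalIntegral.integral_mul_deriv_eq_deriv_mul hgderiv hGderiv
    ((by rwa [Set.uIcc_of_le hab.le] : ContinuousOn g' (Set.uIcc a b)).intervalIntegrable)
    (hcontEb.intervalIntegrable _ _)
  have hGa : G a = 0 := intervalIntegral.integral_same
  -- final estimate
  have hgEb : (∫ μ in a..b, (f μ)⁻¹ * Eb μ) = ∫ μ in a..b, g μ * Eb μ := rfl
  rw [hgEb, hIBP, hGa, mul_zero, sub_zero]
  have hnormg' : ∀ μ ∈ Set.Icc a b, ‖g' μ‖ = ‖f' μ‖ / ‖f μ‖^2 := by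
    intro μ hμ
    rw [hg']
    simp [norm_div, norm_pow]
  have hIcc : Set.uIcc a b = Set.Icc a b := Set.uIcc_of_le hab.le
  have hquotcont : ContinuousOn (fun μ => ‖f' μ‖ / ‖f μ‖ ^ 2) (Set.Icc a b) :=
    (hf'.norm).div ((hfc.norm).pow 2) (fun x hx => pow_ne_zero _ (norm_ne_zero_iff.2 (hne x hx)))
  have hquotnn : ∀ μ ∈ Set.Icc a b, 0 ≤ ‖f' μ‖ / ‖f μ‖ ^ 2 := by
    intro μ _; positivity
  have hIbound : ‖∫ μ in a..b, g' μ * G μ‖ ≤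
      (4 / Real.sqrt t) * ∫ μ in a..b, ‖f' μ‖ / ‖f μ‖ ^ 2 := by
    calc ‖∫ μ in a..b, g' μ * G μ‖ ≤ ∫ μ in a..b, ‖g' μ * G μ‖ :=
          intervalIntegral.norm_integral_le_integral_norm hab.le
      _ ≤ ∫ μ in a..b, (4 / Real.sqrt t) * (‖f' μ‖ / ‖f μ‖ ^ 2) := by
          apply intervalIntegral.integral_mono_on hab.le
          · exact ((hIcc ▸ ((hg'cont.mul hGcont).norm) :
              ContinuousOn _ (Set.uIcc a b))).intervalIntegrable
          · exact ((hIcc ▸ (hquotcont.const_smul (4 / Real.sqrt t)) :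
              ContinuousOn _ (Set.uIcc a b))).intervalIntegrable
          · intro μ hμ
            rw [norm_mul, hnormg' μ hμ, mul_comm]
            apply mul_le_mul (hGbound μ) le_rfl (hquotnn μ hμ)
            positivity
      _ = (4 / Real.sqrt t) * ∫ μ in a..b, ‖f' μ‖ / ‖f μ‖ ^ 2 :=
          intervalIntegral.integral_const_mul _ _
  have hintnn : 0 ≤ ∫ μ in a..b, ‖f' μ‖ / ‖f μ‖ ^ 2 :=
    intervalIntegral.integral_nonneg hab.le (fun μ hμ => hquotnn μ hμ)
  have hgb : ‖g b‖ = 1 / ‖f b‖ := by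
    rw [hg]; simp [one_div]
  have hfbnn : (0:ℝ) ≤ 1 / ‖f b‖ := by positivity
  have hs2 : (1:ℝ) ≤ Real.sqrt 2 := by
    nlinarith [Real.sq_sqrt (show (0:ℝ) ≤ 2 by norm_num), Real.sqrt_nonneg 2]
  have hconst : 4 / Real.sqrt t ≤ 4 * Real.sqrt 2 / Real.sqrt t := by
    gcongr
    nlinarith
  calc ‖g b * G b - ∫ μ in a..b, g' μ * G μ‖
      ≤ ‖g b * G b‖ + ‖∫ μ in a..b, g' μ * G μ‖ := norm_sub_le _ _
    _ ≤ (1 / ‖f b‖) * (4 / Real.sqrt t) +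
        (4 / Real.sqrt t) * ∫ μ in a..b, ‖f' μ‖ / ‖f μ‖ ^ 2 := by
        apply add_le_add ?_ hIbound
        rw [norm_mul, hgb]
        exact mul_le_mul le_rfl (hGbound b) (norm_nonneg _) hfbnn
    _ = (4 / Real.sqrt t) * (1 / ‖f b‖ + ∫ μ in a..b, ‖f' μ‖ / ‖f μ‖ ^ 2) := by ring
    _ ≤ (4 * Real.sqrt 2 / Real.sqrt t) * (1 / ‖f b‖ + ∫ μ in a..b, ‖f' μ‖ / ‖f μ‖ ^ 2) := by
        apply mul_le_mul_of_nonneg_right hconst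
        positivity
end

section
/- Let ℓ = p/q with p, q coprime positive integers, and define for z ∈ ℂ the function d(z) = e^{i(1+ℓ)z}(1 + e^{-2iz} + e^{-2iℓz} - 3 e^{-2i(1+ℓ)z}). Then for real z, d(z) = 0 if and only if z ∈ {m q π : m ∈ ℤ}. -/
open Real

theorem stmt_18 (p q : ℕ) (hp : 0 < p) (hq : 0 < q) (hcop : Nat.Coprime p q)
    (ℓ : ℝ) (hℓ : ℓ = (p : ℝ) / (q : ℝ))
    (d : ℝ → ℂ)
    (hd : ∀ z : ℝ, d z = Complex.exp (Complex.I * (1 + ℓ) * z) *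
      (1 + Complex.exp (-2 * Complex.I * z) + Complex.exp (-2 * Complex.I * (ℓ * z))
        - 3 * Complex.exp (-2 * Complex.I * ((1 + ℓ) * z)))) :
    ∀ z : ℝ, d z = 0 ↔ ∃ m : ℤ, z = (m : ℝ) * (q : ℝ) * π := by
  have hq' : (q : ℝ) ≠ 0 := Nat.cast_ne_zero.mpr hq.ne'
  have hpi : π ≠ 0 := Real.pi_ne_zero
  intro z
  rw [hd]
  constructor
  · intro h
    rcases mul_eq_zero.mp h with h1 | h1
    · exact absurd h1 (Complex.exp_ne_zero _)
    set a : ℝ := -2 * z with ha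
    set b : ℝ := -2 * (ℓ * z) with hb
    have eA : Complex.exp (-2 * Complex.I * z) = Complex.cos a + Complex.sin a * Complex.I := by
      rw [← Complex.exp_mul_I]; congr 1; push_cast [ha]; ring
    have eB : Complex.exp (-2 * Complex.I * (ℓ * z)) = Complex.cos b + Complex.sin b * Complex.I := by
      rw [← Complex.exp_mul_I]; congr 1; push_cast [hb]; ring
    have eC : Complex.exp (-2 * Complex.I * ((1 + ℓ) * z)) =
        Complex.exp (-2 * Complex.I * z) * Complex.exp (-2 * Complex.I * (ℓ * z)) := by
      rw [← Complex.exp_add]; congr 1; push_cast; ring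
    rw [eC, eA, eB] at h1
    have hre := congrArg Complex.re h1
    have him := congrArg Complex.im h1
    simp [Complex.cos_ofReal_re, Complex.sin_ofReal_re] at hre him
    set ca := Real.cos a; set sa := Real.sin a; set cb := Real.cos b; set sb := Real.sin b
    have p1 : sa ^ 2 + ca ^ 2 = 1 := Real.sin_sq_add_cos_sq a
    have p2 : sb ^ 2 + cb ^ 2 = 1 := Real.sin_sq_add_cos_sq b
    have step1 : (1 + ca + cb) ^ 2 + (sa + sb) ^ 2 = 9 := by
      linear_combination (1 + ca + cb + 3*(ca*cb - sa*sb)) * hre + (sa + sb + 3*(ca*sb + sa*cb)) * him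
        + 9*(cb^2 + sb^2) * p1 + 9 * p2
    have step2 : ca * cb + sa * sb ≤ 1 := by nlinarith [sq_nonneg (ca - cb), sq_nonneg (sa - sb)]
    have l1 : ca ≤ 1 := Real.cos_le_one a
    have l2 : cb ≤ 1 := Real.cos_le_one b
    have hcosa : ca = 1 := by nlinarith [step1, step2]
    have hcosb : cb = 1 := by nlinarith [step1, step2]
    obtain ⟨n, hn⟩ := (Real.cos_eq_one_iff a).mp hcosa
    obtain ⟨n', hn'⟩ := (Real.cos_eq_one_iff b).mp hcosb
    rw [ha] at hn
    rw [hb] at hn'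
    have hz : z = -(n : ℝ) * π := by linarith
    have hlz : ℓ * z = -(n' : ℝ) * π := by linarith
    have key : (p : ℝ) * (n : ℝ) = (q : ℝ) * (n' : ℝ) := by
      rw [hℓ, hz] at hlz
      field_simp at hlz
      apply mul_right_cancel₀ hpi
      linear_combination (-π) * hlz
    have keyZ : (p : ℤ) * n = (q : ℤ) * n' := by exact_mod_cast key
    have hdvd : (q : ℤ) ∣ n := by
      have hcop' : IsCoprime (q : ℤ) (p : ℤ) := by
        rw [Int.isCoprime_iff_gcd_eq_one]
        simpa [Int.gcd] using hcop.symm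
      exact hcop'.dvd_of_dvd_mul_left ⟨n', by linarith [keyZ]⟩
    obtain ⟨m, hm⟩ := hdvd
    refine ⟨-m, ?_⟩
    rw [hz, hm]
    push_cast
    ring
  · rintro ⟨m, rfl⟩
    have key : ∀ (x : ℝ) (k : ℤ), x = (k : ℝ) * π → Complex.exp (-2 * Complex.I * (x : ℂ)) = 1 := by
      intro x k hx
      have e : (-2 : ℂ) * Complex.I * (x : ℂ) = ((-k : ℤ) : ℂ) * (2 * (π : ℂ) * Complex.I) := by
        rw [hx]; push_cast; ring
      rw [e, Complex.exp_int_mul_two_pi_mul_I]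
    have e1 : Complex.exp (-2 * Complex.I * (((m : ℝ) * (q : ℝ) * π : ℝ) : ℂ)) = 1 :=
      key _ (m * q) (by push_cast; ring)
    have e2 : Complex.exp (-2 * Complex.I * ((ℓ : ℂ) * (((m : ℝ) * (q : ℝ) * π : ℝ) : ℂ))) = 1 := by
      rw [← Complex.ofReal_mul]
      exact key _ (m * p) (by rw [hℓ]; field_simp; push_cast; ring)
    have e3 : Complex.exp (-2 * Complex.I * ((1 + (ℓ : ℂ)) * (((m : ℝ) * (q : ℝ) * π : ℝ) : ℂ))) = 1 := by
      have e : (1 + (ℓ : ℂ)) * (((m : ℝ) * (q : ℝ) * π : ℝ) : ℂ) = (((1 + ℓ) * ((m : ℝ) * (q : ℝ) * π) : ℝ) : ℂ) := by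
        push_cast; ring
      rw [e]
      exact key _ (m * (q + p)) (by rw [hℓ]; field_simp; push_cast; ring)
    rw [e1, e2, e3]
    ring
end
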